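/- In the expansion BD^{→,⊥,Δ} of Belnap–Dunn logic, for every valuation ν: ν(p₁ → p₂) = ν(¬(Δp₁) ∨ p₂) and ν(⊥) = ν(Δp ∧ ¬(Δp)) for a fixed propositional variable p. Hence → and ⊥ are definable in BD^{→,⊥,Δ} in terms of {¬, ∨, Δ} and {¬, ∧, Δ} respectively; combined with the definability of Δ in terms of {¬, →, ⊥}, the logics BD^{→,⊥} and BD^{Δ} are interdefinable. -/
import Mathlib


namespace BD14

/-- The four truth values of Belnap-Dunn logic:
`t` (true), `f` (false), `b` (both true and false), `n` (neither true nor false). -/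
inductive V4 : Type
  | t | f | b | n
deriving DecidableEq, Repr

namespace V4

/-- `a` lies above truth in the Belnap-Dunn bilattice (i.e. `a ∈ {t, b}`). -/
def hasT : V4 → Bool
  | t => true
  | b => true
  | _ => false

/-- `a` lies above falsity in the Belnap-Dunn bilattice (i.e. `a ∈ {f, b}`). -/
def hasF : V4 → Bool
  | f => true
  | b => true
  | _ => false

def ofTF : Bool → Bool → V4
  | true, true => b
  | true, false => t
  | false, true => f
  | false, false => n

/-- Interpretation of ¬: swaps `t` and `f`, fixes `b` and `n`. -/
def neg4 : V4 → V4
  | t => f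
  | f => t
  | b => b
  | n => n

/-- Interpretation of ∧: greatest lower bound in the lattice order on `V4`
with `f` least, `t` greatest, `b` and `n` incomparable. -/
def and4 (x y : V4) : V4 := ofTF (x.hasT && y.hasT) (x.hasF || y.hasF)

/-- Interpretation of ∨: least upper bound in the lattice order on `V4`
with `f` least, `t` greatest, `b` and `n` incomparable. -/
def or4 (x y : V4) : V4 := ofTF (x.hasT || y.hasT) (x.hasF && y.hasF)

/-- Interpretation of →: `a₁ → a₂ = t` if `a₁ ∉ {t, b}`, and `a₂` otherwise. -/
def imp4 (x y : V4) : V4 := if x = t ∨ x = b then y else t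

/-- The designated truth values: `t` and `b`. -/
def desig (x : V4) : Prop := x = t ∨ x = b

end V4

/-- Interpretation of the is-designated connective Δ:
`Δ(a) = t` if `a ∈ {t, b}` and `f` otherwise. -/
def deltaV (a : V4) : V4 := if a = V4.t ∨ a = V4.b then V4.t else V4.f

/-- Formulas of the common expansion BD^{→,⊥,Δ} of BD^{→,⊥} and BD^{Δ}. -/
inductive Fm : Type
  | var : ℕ → Fm
  | neg : Fm → Fm
  | and : Fm → Fm → Fm
  | or : Fm → Fm → Fm
  | imp : Fm → Fm → Fm
  | bot : Fm
  | delta : Fm → Fm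
deriving DecidableEq

/-- The valuation in the matrix `M^{BD,→,⊥,Δ}` determined by an assignment of
truth values to the propositional variables. -/
def val (v : ℕ → V4) : Fm → V4
  | .var p => v p
  | .neg A => V4.neg4 (val v A)
  | .and A B => V4.and4 (val v A) (val v B)
  | .or A B => V4.or4 (val v A) (val v B)
  | .imp A B => V4.imp4 (val v A) (val v B)
  | .bot => V4.f
  | .delta A => deltaV (val v A)

/-- A formula contains only the connectives ¬, ∨, Δ. -/
def OnlyNegOrDelta : Fm → Prop
  | .var _ => True
  | .neg A => OnlyNegOrDelta A
  | .and _ _ => False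
  | .or A B => OnlyNegOrDelta A ∧ OnlyNegOrDelta B
  | .imp _ _ => False
  | .bot => False
  | .delta A => OnlyNegOrDelta A

/-- A formula contains only the connectives ¬, ∧, Δ. -/
def OnlyNegAndDelta : Fm → Prop
  | .var _ => True
  | .neg A => OnlyNegAndDelta A
  | .and A B => OnlyNegAndDelta A ∧ OnlyNegAndDelta B
  | .or _ _ => False
  | .imp _ _ => False
  | .bot => False
  | .delta A => OnlyNegAndDelta A

/-- A formula contains only the connectives ¬, →, ⊥. -/
def OnlyNegImpBot : Fm → Prop
  | .var _ => True
  | .neg A => OnlyNegImpBot A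
  | .and _ _ => False
  | .or _ _ => False
  | .imp A B => OnlyNegImpBot A ∧ OnlyNegImpBot B
  | .bot => True
  | .delta _ => False

/-- in BD^{→,⊥,Δ}, `p₁ → p₂` is logically equivalent to
`¬(Δp₁) ∨ p₂` and `⊥` is logically equivalent to `Δp ∧ ¬(Δp)`; hence → is
definable in terms of {¬, ∨, Δ} and ⊥ in terms of {¬, ∧, Δ}; combined with the
definability of Δ in terms of {¬, →, ⊥}, the logics BD^{→,⊥} and BD^{Δ} are
interdefinable (in their common expansion BD^{→,⊥,Δ}). -/
theorem stmt14 :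
    (∀ (p₁ p₂ : ℕ) (v : ℕ → V4),
        val v (Fm.imp (Fm.var p₁) (Fm.var p₂)) =
          val v (Fm.or (Fm.neg (Fm.delta (Fm.var p₁))) (Fm.var p₂))) ∧
    (∀ (p : ℕ) (v : ℕ → V4),
        val v Fm.bot = val v (Fm.and (Fm.delta (Fm.var p)) (Fm.neg (Fm.delta (Fm.var p))))) ∧
    (∃ (p₁ p₂ : ℕ) (A : Fm), p₁ ≠ p₂ ∧ OnlyNegOrDelta A ∧
        ∀ v : ℕ → V4, val v (Fm.imp (Fm.var p₁) (Fm.var p₂)) = val v A) ∧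
    (∃ A : Fm, OnlyNegAndDelta A ∧
        ∀ v : ℕ → V4, val v Fm.bot = val v A) ∧
    (∃ (p : ℕ) (A : Fm), OnlyNegImpBot A ∧
        ∀ v : ℕ → V4, val v (Fm.delta (Fm.var p)) = val v A) := by
  refine ⟨?_, ?_, ?_, ?_, ?_⟩
  · intro p₁ p₂ v
    simp only [val]
    cases v p₁ <;> cases v p₂ <;> rfl
  · intro p v
    simp only [val]
    cases v p <;> rfl
  · refine ⟨0, 1, Fm.or (Fm.neg (Fm.delta (Fm.var 0))) (Fm.var 1), by decide, ⟨trivial, trivial⟩, ?_⟩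
    intro v; simp only [val]; cases v 0 <;> cases v 1 <;> rfl
  · refine ⟨Fm.and (Fm.delta (Fm.var 0)) (Fm.neg (Fm.delta (Fm.var 0))), ⟨trivial, trivial⟩, ?_⟩
    intro v; simp only [val]; cases v 0 <;> rfl
  · refine ⟨0, Fm.neg (Fm.imp (Fm.var 0) Fm.bot), ⟨trivial, trivial⟩, ?_⟩
    intro v; simp only [val]; cases v 0 <;> rfl

end BD14
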